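/- arXiv:2205.06150 — 6 statements merged into one kernel-verified Lean document; each statement's English description precedes it below -/
import Mathlib

section
/- If a type A splits into B and C (written B ◁ A ▷ C), then A is equivalent (mutual subtype under the empty context) to the intersection B & C. -/
/-! Syntax of F_i+ types -/
inductive Ty : Type
  | tvar : ℕ → Ty
  | tint : Ty
  | ttop : Ty
  | tbot : Ty
  | and : Ty → Ty → Ty
  | arrow : Ty → Ty → Ty
  | all : ℕ → Ty → Ty → Ty   -- ∀(X * A). B
  | rcd : ℕ → Ty → Ty
  deriving DecidableEq

/-- Type contexts: lists of (type variable, disjointness bound), most recent first. -/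
abbrev TCtx := List (ℕ × Ty)
/-- Term contexts. -/
abbrev Ctx := List (ℕ × Ty)

/-- Type well-formedness Δ ⊢ A. -/
inductive WfTy : TCtx → Ty → Prop
  | tvar {Δ X A} : (X, A) ∈ Δ → WfTy Δ (.tvar X)
  | tint {Δ} : WfTy Δ .tint
  | ttop {Δ} : WfTy Δ .ttop
  | tbot {Δ} : WfTy Δ .tbot
  | and {Δ A B} : WfTy Δ A → WfTy Δ B → WfTy Δ (.and A B)
  | arrow {Δ A B} : WfTy Δ A → WfTy Δ B → WfTy Δ (.arrow A B)
  | all {Δ X A B} : WfTy Δ A → WfTy ((X, A) :: Δ) B → WfTy Δ (.all X A B)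
  | rcd {Δ l A} : WfTy Δ A → WfTy Δ (.rcd l A)

/-- Type context well-formedness ⊢ Δ. -/
inductive TCW : TCtx → Prop
  | nil : TCW []
  | cons {Δ X A} : TCW Δ → WfTy Δ A → X ∉ Δ.map Prod.fst → TCW ((X, A) :: Δ)

/-- Term context well-formedness Δ ⊢ Γ. -/
def CW (Δ : TCtx) (Γ : Ctx) : Prop := ∀ p ∈ Γ, WfTy Δ p.2

/-- Type splitting  B ◁ A ▷ C, written `Spl A B C`. -/
inductive Spl : Ty → Ty → Ty → Prop
  | and {A B} : Spl (.and A B) A B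
  | arrow {A B B1 B2} : Spl B B1 B2 → Spl (.arrow A B) (.arrow A B1) (.arrow A B2)
  | rcd {l A A1 A2} : Spl A A1 A2 → Spl (.rcd l A) (.rcd l A1) (.rcd l A2)
  | all {X A B B1 B2} : Spl B B1 B2 → Spl (.all X A B) (.all X A B1) (.all X A B2)

/-- Ordinary types: no positive occurrence of intersection. -/
inductive Ordinary : Ty → Prop
  | tvar {X} : Ordinary (.tvar X)
  | tint : Ordinary .tint
  | ttop : Ordinary .ttop
  | tbot : Ordinary .tbot
  | arrow {A B} : Ordinary B → Ordinary (.arrow A B)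
  | all {X A B} : Ordinary B → Ordinary (.all X A B)
  | rcd {l A} : Ordinary A → Ordinary (.rcd l A)

/-- Bottom-like types ⌋A⌊. -/
inductive BL : Ty → Prop
  | bot : BL .tbot
  | andl {A B} : BL A → BL (.and A B)
  | andr {A B} : BL B → BL (.and A B)

/-- Algorithmic top-like types Δ ⊢ ⌉A⌈. -/
inductive TL : TCtx → Ty → Prop
  | top {Δ} : TL Δ .ttop
  | and {Δ A B} : TL Δ A → TL Δ B → TL Δ (.and A B)
  | arrow {Δ A B} : TL Δ B → TL Δ (.arrow A B)
  | rcd {Δ l A} : TL Δ A → TL Δ (.rcd l A)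
  | all {Δ X A B} : TL ((X, A) :: Δ) B → TL Δ (.all X A B)
  | tvar {Δ X A} : (X, A) ∈ Δ → BL A → TL Δ (.tvar X)

/-- Declarative BCD-style subtyping Δ ⊢ A <: B of F_i+. -/
inductive DSub : TCtx → Ty → Ty → Prop
  | refl {Δ A} : DSub Δ A A
  | trans {Δ A B C} : DSub Δ A B → DSub Δ B C → DSub Δ A C
  | top {Δ A} : DSub Δ A .ttop
  | bot {Δ A} : DSub Δ .tbot A
  | and {Δ A B C} : DSub Δ A B → DSub Δ A C → DSub Δ A (.and B C)
  | andl {Δ A B} : DSub Δ (.and A B) A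
  | andr {Δ A B} : DSub Δ (.and A B) B
  | arrow {Δ A1 A2 B1 B2} : DSub Δ B1 A1 → DSub Δ A2 B2 →
      DSub Δ (.arrow A1 A2) (.arrow B1 B2)
  | distArrow {Δ A B C} : DSub Δ (.and (.arrow A B) (.arrow A C)) (.arrow A (.and B C))
  | topArrow {Δ} : DSub Δ .ttop (.arrow .ttop .ttop)
  | rcd {Δ l A B} : DSub Δ A B → DSub Δ (.rcd l A) (.rcd l B)
  | distRcd {Δ l A B} : DSub Δ (.and (.rcd l A) (.rcd l B)) (.rcd l (.and A B))
  | topRcd {Δ l} : DSub Δ .ttop (.rcd l .ttop)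
  | all {Δ X A1 A2 B1 B2} : DSub Δ B1 A1 → DSub ((X, B1) :: Δ) A2 B2 →
      DSub Δ (.all X A1 A2) (.all X B1 B2)
  | topAll {Δ X A} : DSub Δ .ttop (.all X A .ttop)
  | distAll {Δ X A B C} : DSub Δ (.and (.all X A B) (.all X A C)) (.all X A (.and B C))
  | topVar {Δ X A} : (X, A) ∈ Δ → DSub Δ A .tbot → DSub Δ .ttop (.tvar X)

/-- Algorithmic subtyping Δ ⊢ A ≤ B with splittable types. -/
inductive ASub : TCtx → Ty → Ty → Prop
  | and {Δ A B B1 B2} : Spl B B1 B2 → ASub Δ A B1 → ASub Δ A B2 → ASub Δ A B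
  | int {Δ} : ASub Δ .tint .tint
  | var {Δ X} : ASub Δ (.tvar X) (.tvar X)
  | bot {Δ B} : Ordinary B → ASub Δ .tbot B
  | top {Δ A B} : Ordinary B → TL Δ B → ASub Δ A B
  | andl {Δ A1 A2 B} : Ordinary B → ASub Δ A1 B → ASub Δ (.and A1 A2) B
  | andr {Δ A1 A2 B} : Ordinary B → ASub Δ A2 B → ASub Δ (.and A1 A2) B
  | arrow {Δ A1 A2 B1 B2} : Ordinary (.arrow B1 B2) → ASub Δ B1 A1 → ASub Δ A2 B2 →
      ASub Δ (.arrow A1 A2) (.arrow B1 B2)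
  | rcd {Δ l A B} : Ordinary (.rcd l B) → ASub Δ A B → ASub Δ (.rcd l A) (.rcd l B)
  | all {Δ X A1 A2 B1 B2} : Ordinary (.all X B1 B2) → ASub Δ B1 A1 →
      ASub ((X, B1) :: Δ) A2 B2 → ASub Δ (.all X A1 A2) (.all X B1 B2)

/-- Disjointness axioms for structurally different type constructors. -/
inductive DAx : Ty → Ty → Prop
  | intArrow {A B} : DAx .tint (.arrow A B)
  | intRcd {l A} : DAx .tint (.rcd l A)
  | intAll {X A B} : DAx .tint (.all X A B)
  | arrowRcd {A B l C} : DAx (.arrow A B) (.rcd l C)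
  | arrowAll {A B X C D} : DAx (.arrow A B) (.all X C D)
  | rcdAll {l A X B C} : DAx (.rcd l A) (.all X B C)
  | rcdNeq {l1 l2 A B} : l1 ≠ l2 → DAx (.rcd l1 A) (.rcd l2 B)
  | symm {A B} : DAx A B → DAx B A

/-- Algorithmic disjointness Δ ⊢ A * B. -/
inductive Disj : TCtx → Ty → Ty → Prop
  | topl {Δ A B} : TL Δ A → Disj Δ A B
  | topr {Δ A B} : TL Δ B → Disj Δ A B
  | varl {Δ X A B} : (X, A) ∈ Δ → ASub Δ A B → Disj Δ (.tvar X) B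
  | varr {Δ X A B} : (X, A) ∈ Δ → ASub Δ A B → Disj Δ B (.tvar X)
  | spll {Δ A A1 A2 B} : Spl A A1 A2 → Disj Δ A1 B → Disj Δ A2 B → Disj Δ A B
  | splr {Δ A B B1 B2} : Spl B B1 B2 → Disj Δ A B1 → Disj Δ A B2 → Disj Δ A B
  | arrow {Δ A1 A2 B1 B2} : Disj Δ A2 B2 → Disj Δ (.arrow A1 A2) (.arrow B1 B2)
  | rcd {Δ l A B} : Disj Δ A B → Disj Δ (.rcd l A) (.rcd l B)
  | all {Δ X A1 A2 B1 B2} : Disj ((X, .and A1 B1) :: Δ) A2 B2 →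
      Disj Δ (.all X A1 A2) (.all X B1 B2)
  | ax {Δ A B} : DAx A B → Disj Δ A B

/-- Substitution of type C for type variable X in a type. -/
def substTT (X : ℕ) (C : Ty) : Ty → Ty
  | .tvar Y => if Y = X then C else .tvar Y
  | .tint => .tint
  | .ttop => .ttop
  | .tbot => .tbot
  | .and A B => .and (substTT X C A) (substTT X C B)
  | .arrow A B => .arrow (substTT X C A) (substTT X C B)
  | .all Y A B => .all Y (substTT X C A) (if Y = X then B else substTT X C B)
  | .rcd l A => .rcd l (substTT X C A)

/-- Pointwise substitution in a type context. -/
def substCtx (X : ℕ) (C : Ty) (Δ : TCtx) : TCtx :=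
  Δ.map fun p => (p.1, substTT X C p.2)

/-! Expressions -/
inductive Exp : Type
  | evar : ℕ → Exp
  | lit : ℤ → Exp
  | etop : Exp
  | anno : Exp → Ty → Exp
  | merge : Exp → Exp → Exp
  | efix : ℕ → Ty → Exp → Exp
  | app : Exp → Exp → Exp
  | tapp : Exp → Ty → Exp
  | proj : Exp → ℕ → Exp
  | lam : ℕ → Ty → Exp → Exp
  | tabs : ℕ → Exp → Exp
  | rcd : ℕ → Exp → Exp
  deriving DecidableEq

/-- Checkable terms p: lambdas, type abstractions, records. -/
inductive Chk : Exp → Prop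
  | lam {x A e} : Chk (.lam x A e)
  | tabs {X e} : Chk (.tabs X e)
  | rcd {l e} : Chk (.rcd l e)

/-- Values. -/
inductive Value : Exp → Prop
  | chk {p} : Chk p → Value p
  | anno {p A} : Chk p → Value (.anno p A)
  | lit {i} : Value (.lit i)
  | top : Value .etop
  | merge {v1 v2} : Value v1 → Value v2 → Value (.merge v1 v2)

/-- Pre-values u. -/
inductive PVal : Exp → Prop
  | lit {i} : PVal (.lit i)
  | top : PVal .etop
  | anno {e A} : PVal (.anno e A)
  | merge {u1 u2} : PVal u1 → PVal u2 → PVal (.merge u1 u2)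

/-- Principal types of pre-values. -/
inductive PTyp : Exp → Ty → Prop
  | lit {i} : PTyp (.lit i) .tint
  | top : PTyp .etop .ttop
  | anno {e A} : PTyp (.anno e A) A
  | merge {u1 u2 A B} : PTyp u1 A → PTyp u2 B → PTyp (.merge u1 u2) (.and A B)

/-- Top-like value generator ⟦A⟧. -/
def TLVal : Ty → Exp
  | .ttop => .etop
  | .arrow A B => .anno (.lam 0 .ttop .etop) (.arrow A B)
  | .rcd l A => .anno (.rcd l .etop) (.rcd l A)
  | .all X A B => .anno (.tabs X .etop) (.all X A B)
  | _ => .etop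

/-- Consistency of pre-values u₁ ≈ u₂. -/
inductive Cons : Exp → Exp → Prop
  | lit {i} : Cons (.lit i) (.lit i)
  | top : Cons .etop .etop
  | anno {e A B} : Cons (.anno e A) (.anno e B)
  | disjoint {u1 u2 A B} : PTyp u1 A → PTyp u2 B → Disj [] A B → Cons u1 u2
  | mergel {u1 u2 u} : Cons u1 u → Cons u2 u → Cons (.merge u1 u2) u
  | merger {u u1 u2} : Cons u u1 → Cons u u2 → Cons u (.merge u1 u2)

/-- Applicative distribution A ▷ B. -/
inductive AppDist : Ty → Ty → Prop
  | refl {A} : AppDist A A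
  | arrow {A B A1 B1 A2 B2} : AppDist A (.arrow A1 B1) → AppDist B (.arrow A2 B2) →
      AppDist (.and A B) (.arrow (.and A1 A2) (.and B1 B2))
  | all {A B X A1 B1 A2 B2} : AppDist A (.all X A1 B1) → AppDist B (.all X A2 B2) →
      AppDist (.and A B) (.all X (.and A1 A2) (.and B1 B2))
  | rcd {A B l B1 B2} : AppDist A (.rcd l B1) → AppDist B (.rcd l B2) →
      AppDist (.and A B) (.rcd l (.and B1 B2))

/-- Typing modes. -/
inductive Mode | inf | chk

/-- Bidirectional typing Δ; Γ ⊢ e ⇔ A. -/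
inductive Typing : TCtx → Ctx → Exp → Mode → Ty → Prop
  | top {Δ Γ} : TCW Δ → CW Δ Γ → Typing Δ Γ .etop .inf .ttop
  | lit {Δ Γ i} : TCW Δ → CW Δ Γ → Typing Δ Γ (.lit i) .inf .tint
  | var {Δ Γ x A} : TCW Δ → CW Δ Γ → (x, A) ∈ Γ → Typing Δ Γ (.evar x) .inf A
  | abs {Δ Γ x A e B1 B2} : WfTy Δ A → DSub Δ B1 A →
      Typing Δ ((x, A) :: Γ) e .chk B2 → Typing Δ Γ (.lam x A e) .chk (.arrow B1 B2)
  | tabs {Δ Γ X A e B} : WfTy Δ A → Typing ((X, A) :: Δ) Γ e .chk B →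
      Typing Δ Γ (.tabs X e) .chk (.all X A B)
  | rcd {Δ Γ l e A} : Typing Δ Γ e .chk A → Typing Δ Γ (.rcd l e) .chk (.rcd l A)
  | app {Δ Γ e1 e2 A B C} : Typing Δ Γ e1 .inf A → AppDist A (.arrow B C) →
      Typing Δ Γ e2 .chk B → Typing Δ Γ (.app e1 e2) .inf C
  | tapp {Δ Γ e A X B C A'} : Typing Δ Γ e .inf A → AppDist A (.all X B C) →
      WfTy Δ A' → Disj Δ A' B → Typing Δ Γ (.tapp e A') .inf (substTT X A' C)
  | proj {Δ Γ e A l B} : Typing Δ Γ e .inf A → AppDist A (.rcd l B) →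
      Typing Δ Γ (.proj e l) .inf B
  | merge {Δ Γ e1 e2 A B} : Typing Δ Γ e1 .inf A → Typing Δ Γ e2 .inf B →
      Disj Δ A B → Typing Δ Γ (.merge e1 e2) .inf (.and A B)
  | mergev {Δ Γ u1 u2 A B} : PVal u1 → PVal u2 → Cons u1 u2 →
      Typing Δ Γ u1 .inf A → Typing Δ Γ u2 .inf B →
      Typing Δ Γ (.merge u1 u2) .inf (.and A B)
  | inter {Δ Γ e A B} : Typing Δ Γ e .chk A → Typing Δ Γ e .chk B →
      Typing Δ Γ e .chk (.and A B)
  | fix {Δ Γ x A e} : WfTy Δ A → Typing Δ ((x, A) :: Γ) e .chk A →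
      Typing Δ Γ (.efix x A e) .inf A
  | anno {Δ Γ e A} : WfTy Δ A → Typing Δ Γ e .chk A → Typing Δ Γ (.anno e A) .inf A
  | sub {Δ Γ e A B} : Typing Δ Γ e .inf A → DSub Δ A B → Typing Δ Γ e .chk B

/-- Substitution of type C for type variable X in an expression. -/
def substTE (X : ℕ) (C : Ty) : Exp → Exp
  | .evar x => .evar x
  | .lit i => .lit i
  | .etop => .etop
  | .anno e A => .anno (substTE X C e) (substTT X C A)
  | .merge e1 e2 => .merge (substTE X C e1) (substTE X C e2)
  | .efix x A e => .efix x (substTT X C A) (substTE X C e)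
  | .app e1 e2 => .app (substTE X C e1) (substTE X C e2)
  | .tapp e A => .tapp (substTE X C e) (substTT X C A)
  | .proj e l => .proj (substTE X C e) l
  | .lam x A e => .lam x (substTT X C A) (substTE X C e)
  | .tabs Y e => .tabs Y (if Y = X then e else substTE X C e)
  | .rcd l e => .rcd l (substTE X C e)

/-- Substitution of expression e' for term variable x in an expression. -/
def substEE (x : ℕ) (e' : Exp) : Exp → Exp
  | .evar y => if y = x then e' else .evar y
  | .lit i => .lit i
  | .etop => .etop
  | .anno e A => .anno (substEE x e' e) A
  | .merge e1 e2 => .merge (substEE x e' e1) (substEE x e' e2)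
  | .efix y A e => .efix y A (if y = x then e else substEE x e' e)
  | .app e1 e2 => .app (substEE x e' e1) (substEE x e' e2)
  | .tapp e A => .tapp (substEE x e' e) A
  | .proj e l => .proj (substEE x e' e) l
  | .lam y A e => .lam y A (if y = x then e else substEE x e' e)
  | .tabs Y e => .tabs Y (substEE x e' e)
  | .rcd l e => .rcd l (substEE x e' e)

/-- Casting v ↪_A v'. -/
inductive Cast : Exp → Ty → Exp → Prop
  | int {i} : Cast (.lit i) .tint (.lit i)
  | top {v A} : Ordinary A → TL [] A → Cast v A (TLVal A)
  | anno {p B A} : Chk p → Ordinary A → ¬ TL [] A → DSub [] B A →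
      Cast (.anno p B) A (.anno p A)
  | mergel {v1 v2 A v} : Ordinary A → Cast v1 A v → Cast (.merge v1 v2) A v
  | merger {v1 v2 A v} : Ordinary A → Cast v2 A v → Cast (.merge v1 v2) A v
  | and {v A A1 A2 v1 v2} : Spl A A1 A2 → Cast v A1 v1 → Cast v A2 v2 →
      Cast v A (.merge v1 v2)

/-- Expression wrapping e ↝_A u. -/
inductive Wrap : Exp → Ty → Exp → Prop
  | and {e A A1 A2 u1 u2} : Spl A A1 A2 → Wrap e A1 u1 → Wrap e A2 u2 →
      Wrap e A (.merge u1 u2)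
  | anno {e A} : Ordinary A → ¬ TL [] A → Wrap e A (.anno e A)
  | top {e A} : Ordinary A → TL [] A → Wrap e A (TLVal A)

/-- Arguments: expressions, types, or record labels. -/
inductive Arg : Type
  | exp : Exp → Arg
  | ty : Ty → Arg
  | lbl : ℕ → Arg

/-- Parallel application v • arg ↪ u. -/
inductive PApp : Exp → Arg → Exp → Prop
  | abs {x A e B C e' u} : Wrap e' A u →
      PApp (.anno (.lam x A e) (.arrow B C)) (.exp e') (.anno (substEE x u e) C)
  | tabs {X e A B C} :
      PApp (.anno (.tabs X e) (.all X A B)) (.ty C)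
        (.anno (substTE X C e) (substTT X C B))
  | proj {l e A} : PApp (.anno (.rcd l e) (.rcd l A)) (.lbl l) (.anno e A)
  | merge {v1 v2 arg u1 u2} : PApp v1 arg u1 → PApp v2 arg u2 →
      PApp (.merge v1 v2) arg (.merge u1 u2)

/-- Small-step call-by-name reduction e ↪ e'. -/
inductive Step : Exp → Exp → Prop
  | papp {v e u} : Value v → PApp v (.exp e) u → Step (.app v e) u
  | ptapp {v A u} : Value v → PApp v (.ty A) u → Step (.tapp v A) u
  | pproj {v l u} : Value v → PApp v (.lbl l) u → Step (.proj v l) u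
  | fix {x A e} : Step (.efix x A e) (.anno (substEE x (.efix x A e) e) A)
  | annov {v A v'} : Value v → PVal v → Cast v A v' → Step (.anno v A) v'
  | appl {e1 e1' e2} : Step e1 e1' → Step (.app e1 e2) (.app e1' e2)
  | tappl {e e' A} : Step e e' → Step (.tapp e A) (.tapp e' A)
  | projl {e e' l} : Step e e' → Step (.proj e l) (.proj e' l)
  | anno {e e' A} : Step e e' → Step (.anno e A) (.anno e' A)
  | merge {e1 e1' e2 e2'} : Step e1 e1' → Step e2 e2' →
      Step (.merge e1 e2) (.merge e1' e2')
  | mergel {e1 e1' v2} : Step e1 e1' → Value v2 → Step (.merge e1 v2) (.merge e1' v2)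
  | merger {v1 e2 e2'} : Value v1 → Step e2 e2' → Step (.merge v1 e2) (.merge v1 e2')

/-- Isomorphic subtyping A ≲ B. -/
inductive IsoSub : Ty → Ty → Prop
  | refl {A} : IsoSub A A
  | and {A1 A2 B B1 B2} : Spl B B1 B2 → IsoSub A1 B1 → IsoSub A2 B2 →
      IsoSub (.and A1 A2) B

lemma spl_equiv_aux {A B C : Ty} (h : Spl A B C) :
    ∀ Δ, DSub Δ A (.and B C) ∧ DSub Δ (.and B C) A := by
  induction h with
  | and => exact fun Δ => ⟨.refl, .refl⟩
  | arrow hs ih =>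
    intro Δ
    obtain ⟨ih1, ih2⟩ := ih Δ
    exact ⟨.and (.arrow .refl (ih1.trans .andl)) (.arrow .refl (ih1.trans .andr)),
      .trans .distArrow (.arrow .refl ih2)⟩
  | rcd hs ih =>
    intro Δ
    obtain ⟨ih1, ih2⟩ := ih Δ
    exact ⟨.and (.rcd (ih1.trans .andl)) (.rcd (ih1.trans .andr)),
      .trans .distRcd (.rcd ih2)⟩
  | @all X A B B1 B2 hs ih =>
    intro Δ
    obtain ⟨ih1, ih2⟩ := ih ((X, A) :: Δ)
    exact ⟨.and (.all .refl (ih1.trans .andl)) (.all .refl (ih1.trans .andr)),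
      .trans .distAll (.all .refl ih2)⟩

/-- Type splitting loses no information. -/
theorem splitting_loses_no_information (A B C : Ty) (h : Spl A B C) :
    DSub [] A (.and B C) ∧ DSub [] (.and B C) A := spl_equiv_aux h []
end

section
/- A type is ordinary (not splittable) if and only if it has no positive occurrence of an intersection: every F_i+ type is either ordinary or splittable, and these cases are mutually exclusive. -/
/-- Every type is either ordinary or splittable, exclusively. -/
theorem ordinary_or_splittable (A : Ty) :
    (Ordinary A ∨ ∃ B C, Spl A B C) ∧ ¬ (Ordinary A ∧ ∃ B C, Spl A B C) := by
  induction A with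
  | tvar X => exact ⟨Or.inl .tvar, by rintro ⟨_, _, _, h⟩; cases h⟩
  | tint => exact ⟨Or.inl .tint, by rintro ⟨_, _, _, h⟩; cases h⟩
  | ttop => exact ⟨Or.inl .ttop, by rintro ⟨_, _, _, h⟩; cases h⟩
  | tbot => exact ⟨Or.inl .tbot, by rintro ⟨_, _, _, h⟩; cases h⟩
  | and A B ihA ihB =>
      exact ⟨Or.inr ⟨A, B, .and⟩, by rintro ⟨h, _⟩; cases h⟩
  | arrow A B ihA ihB =>
      constructor
      · rcases ihB.1 with h | ⟨B1, B2, h⟩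
        · exact Or.inl (.arrow h)
        · exact Or.inr ⟨_, _, .arrow h⟩
      · rintro ⟨ho, _, _, hs⟩
        cases ho with | arrow hB => cases hs with | arrow hs =>
          exact ihB.2 ⟨hB, _, _, hs⟩
  | all X A B ihA ihB =>
      constructor
      · rcases ihB.1 with h | ⟨B1, B2, h⟩
        · exact Or.inl (.all h)
        · exact Or.inr ⟨_, _, .all h⟩
      · rintro ⟨ho, _, _, hs⟩
        cases ho with | all hB => cases hs with | all hs =>
          exact ihB.2 ⟨hB, _, _, hs⟩
  | rcd l A ihA =>
      constructor
      · rcases ihA.1 with h | ⟨B1, B2, h⟩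
        · exact Or.inl (.rcd h)
        · exact Or.inr ⟨_, _, .rcd h⟩
      · rintro ⟨ho, _, _, hs⟩
        cases ho with | rcd hA => cases hs with | rcd hs =>
          exact ihA.2 ⟨hA, _, _, hs⟩
end

section
/- Inversion of the supertype in algorithmic subtyping: if B splits into B₁ and B₂, then Δ ⊢ A ≤ B holds if and only if both Δ ⊢ A ≤ B₁ and Δ ⊢ A ≤ B₂ hold. -/
lemma spl_det {B B1 B2 C1 C2 : Ty} (h1 : Spl B B1 B2) (h2 : Spl B C1 C2) :
    B1 = C1 ∧ B2 = C2 := by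
  induction h1 generalizing C1 C2 with
  | and => cases h2; exact ⟨rfl, rfl⟩
  | arrow _ ih => cases h2 with | arrow h => obtain ⟨rfl, rfl⟩ := ih h; exact ⟨rfl, rfl⟩
  | rcd _ ih => cases h2 with | rcd h => obtain ⟨rfl, rfl⟩ := ih h; exact ⟨rfl, rfl⟩
  | all _ ih => cases h2 with | all h => obtain ⟨rfl, rfl⟩ := ih h; exact ⟨rfl, rfl⟩

lemma spl_not_ord {B B1 B2 : Ty} (h : Spl B B1 B2) : ¬ Ordinary B := by
  induction h with
  | and => intro ho; cases ho
  | arrow _ ih => intro ho; cases ho with | arrow h => exact ih h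
  | rcd _ ih => intro ho; cases ho with | rcd h => exact ih h
  | all _ ih => intro ho; cases ho with | all h => exact ih h

/-- Inversion of the supertype in algorithmic subtyping. -/
theorem asub_split_inversion (Δ : TCtx) (A B B1 B2 : Ty) (h : Spl B B1 B2) :
    ASub Δ A B ↔ (ASub Δ A B1 ∧ ASub Δ A B2) := by
  constructor
  · intro hs
    cases hs with
    | and h' h1 h2 => obtain ⟨rfl, rfl⟩ := spl_det h' h; exact ⟨h1, h2⟩
    | int => cases h
    | var => cases h
    | bot ho => exact absurd ho (spl_not_ord h)
    | top ho _ => exact absurd ho (spl_not_ord h)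
    | andl ho _ => exact absurd ho (spl_not_ord h)
    | andr ho _ => exact absurd ho (spl_not_ord h)
    | arrow ho _ _ => exact absurd ho (spl_not_ord h)
    | rcd ho _ => exact absurd ho (spl_not_ord h)
    | all ho _ _ => exact absurd ho (spl_not_ord h)
  · rintro ⟨h1, h2⟩; exact ASub.and h h1 h2
end

section
/- Equivalence of bottom-like types: for a well-formed type context Δ and well-formed type A, A is bottom-like if and only if Δ ⊢ A <: Bot. -/
theorem dsub_bl {Δ A B} (h : DSub Δ A B) : BL B → BL A := by
  induction h with
  | refl => exact id
  | trans _ _ ih1 ih2 => exact fun hb => ih1 (ih2 hb)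
  | top => intro hb; cases hb
  | bot => exact fun _ => BL.bot
  | and _ _ ih1 ih2 =>
      intro hb; cases hb with
      | andl h => exact ih1 h
      | andr h => exact ih2 h
  | andl => exact fun hb => BL.andl hb
  | andr => exact fun hb => BL.andr hb
  | arrow => intro hb; cases hb
  | distArrow => intro hb; cases hb
  | topArrow => intro hb; cases hb
  | rcd => intro hb; cases hb
  | distRcd => intro hb; cases hb
  | topRcd => intro hb; cases hb
  | all => intro hb; cases hb
  | topAll => intro hb; cases hb
  | distAll => intro hb; cases hb
  | topVar => intro hb; cases hb

theorem bl_dsub {Δ A} (h : BL A) : DSub Δ A .tbot := by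
  induction h with
  | bot => exact DSub.refl
  | andl _ ih => exact DSub.trans DSub.andl ih
  | andr _ ih => exact DSub.trans DSub.andr ih

/-- Equivalence of bottom-like types. -/
theorem bottom_like_equiv (Δ : TCtx) (A : Ty) (hΔ : TCW Δ) (hA : WfTy Δ A) :
    BL A ↔ DSub Δ A .tbot :=
  ⟨bl_dsub, fun h => dsub_bl h BL.bot⟩
end

section
/- Top-like equivalence: Δ ⊢ ⌉A⌈ (A is top-like under Δ by the algorithm) holds if and only if Δ ⊢ Top <: A in the declarative subtyping. -/
/-!
Soundness: each top-like rule is matched by the corresponding `Top <: …` axiom followed by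
congruence. Completeness: top-likeness is closed upwards under `<:`. The delicate rule is the
quantifier one, contravariant in the bound; it goes through because bottom-likeness is closed
downwards, and a context matters to `TL` only through its variables with bottom-like bounds.
-/

def botVars (Δ : TCtx) : Set ℕ := {X | ∃ B, (X, B) ∈ Δ ∧ BL B}

lemma botVars_cons_subset {Δ Δ' : TCtx} {X : ℕ} {B B' : Ty} (hB : BL B → BL B')
    (h : botVars Δ ⊆ botVars Δ') : botVars ((X, B) :: Δ) ⊆ botVars ((X, B') :: Δ') := by
  rintro Y ⟨C, hmem, hC⟩
  rcases List.mem_cons.1 hmem with heq | hmem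
  · obtain ⟨rfl, rfl⟩ := Prod.mk.inj heq
    exact ⟨B', List.mem_cons_self, hB hC⟩
  · obtain ⟨C', hmem', hC'⟩ := h ⟨C, hmem, hC⟩
    exact ⟨C', List.mem_cons_of_mem _ hmem', hC'⟩

lemma BL.of_dSub {Δ : TCtx} {A B : Ty} (h : DSub Δ A B) (hB : BL B) : BL A := by
  induction h with
  | refl => exact hB
  | trans _ _ ih₁ ih₂ => exact ih₁ (ih₂ hB)
  | bot => exact .bot
  | and _ _ ih₁ ih₂ =>
    rcases hB with _ | hB | hB
    · exact ih₁ hB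
    · exact ih₂ hB
  | andl => exact .andl hB
  | andr => exact .andr hB
  | _ => cases hB

lemma BL.dSub_bot {Δ : TCtx} {A : Ty} (h : BL A) : DSub Δ A .tbot := by
  induction h with
  | bot => exact .refl
  | andl _ ih => exact .trans .andl ih
  | andr _ ih => exact .trans .andr ih

lemma TL.mono {Δ Δ' : TCtx} {A : Ty} (hΔ : botVars Δ ⊆ botVars Δ') (h : TL Δ A) :
    TL Δ' A := by
  induction h generalizing Δ' with
  | top => exact .top
  | and _ _ ih₁ ih₂ => exact .and (ih₁ hΔ) (ih₂ hΔ)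
  | arrow _ ih => exact .arrow (ih hΔ)
  | rcd _ ih => exact .rcd (ih hΔ)
  | all _ ih => exact .all (ih (botVars_cons_subset id hΔ))
  | tvar hmem hbl =>
    obtain ⟨C, hmem', hC⟩ := hΔ ⟨_, hmem, hbl⟩
    exact .tvar hmem' hC

lemma TL.of_dSub {Δ : TCtx} {A B : Ty} (h : DSub Δ A B) (hA : TL Δ A) : TL Δ B := by
  induction h with
  | refl => exact hA
  | trans _ _ ih₁ ih₂ => exact ih₂ (ih₁ hA)
  | top => exact .top
  | bot => cases hA
  | and _ _ ih₁ ih₂ => exact .and (ih₁ hA) (ih₂ hA)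
  | andl => cases hA with | and hA _ => exact hA
  | andr => cases hA with | and _ hA => exact hA
  | arrow _ _ _ ih => cases hA with | arrow hA => exact .arrow (ih hA)
  | distArrow =>
    cases hA with | and hB hC => cases hB with | arrow hB => cases hC with | arrow hC =>
    exact .arrow (.and hB hC)
  | topArrow => exact .arrow .top
  | rcd _ ih => cases hA with | rcd hA => exact .rcd (ih hA)
  | distRcd =>
    cases hA with | and hA hB => cases hA with | rcd hA => cases hB with | rcd hB =>
    exact .rcd (.and hA hB)
  | topRcd => exact .rcd .top
  | all hbound _ _ ih =>
    cases hA with | all hA =>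
    exact .all (ih (hA.mono (botVars_cons_subset (BL.of_dSub hbound) subset_rfl)))
  | topAll => exact .all .top
  | distAll =>
    cases hA with | and hB hC => cases hB with | all hB => cases hC with | all hC =>
    exact .all (.and hB hC)
  | topVar hmem hbot => exact .tvar hmem (BL.of_dSub hbot .bot)

lemma TL.top_dSub {Δ : TCtx} {A : Ty} (h : TL Δ A) : DSub Δ .ttop A := by
  induction h with
  | top => exact .refl
  | and _ _ ih₁ ih₂ => exact .and ih₁ ih₂
  | arrow _ ih => exact .trans .topArrow (.arrow .top ih)
  | rcd _ ih => exact .trans .topRcd (.rcd ih)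
  | all _ ih => exact .trans .topAll (.all .refl ih)
  | tvar hmem hbl => exact .topVar hmem hbl.dSub_bot

/-- Top-like equivalence. -/
theorem top_like_equiv (Δ : TCtx) (A : Ty) :
    TL Δ A ↔ DSub Δ .ttop A :=
  ⟨TL.top_dSub, fun h => TL.of_dSub h .top⟩
end

section
/- Covariance of disjointness: if Δ ⊢ A * B and Δ ⊢ B ≤ C, then Δ ⊢ A * C. -/
/-! Subtyping and top-likeness see the type context only through the set of variables whose
bound is bottom-like, and subtypes of bottom-like types are bottom-like, so both survive narrowing
a bound. Covariance is proved by induction on the disjointness derivation, simultaneously for all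
narrowings of its context: in the universal case the bodies are compared under `A₁ & C₁`, a
narrowing of `A₁ & B₁`. A splittable supertype is handled through its parts, so only ordinary
supertypes need care. Transitivity of subtyping, needed at type variables, goes by induction on
the size of the middle type, then of the left one. -/

theorem Spl.not_ordinary {A A1 A2 : Ty} (hs : Spl A A1 A2) : ¬ Ordinary A := by
  intro hA
  induction hs with
  | and => cases hA
  | arrow _ ih => cases hA with | arrow h => exact ih h
  | rcd _ ih => cases hA with | rcd h => exact ih h
  | all _ ih => cases hA with | all h => exact ih h

theorem Spl.sizeOf_lt {A A1 A2 : Ty} (hs : Spl A A1 A2) :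
    sizeOf A1 < sizeOf A ∧ sizeOf A2 < sizeOf A := by
  induction hs <;> simp <;> omega

theorem Ty.ordinary_or_split (A : Ty) : Ordinary A ∨ ∃ A1 A2, Spl A A1 A2 := by
  induction A with
  | tvar => exact .inl .tvar
  | tint => exact .inl .tint
  | ttop => exact .inl .ttop
  | tbot => exact .inl .tbot
  | and A B => exact .inr ⟨A, B, .and⟩
  | arrow _ _ _ ih =>
    rcases ih with h | ⟨_, _, h⟩
    exacts [.inl (.arrow h), .inr ⟨_, _, .arrow h⟩]
  | all _ _ _ _ ih =>
    rcases ih with h | ⟨_, _, h⟩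
    exacts [.inl (.all h), .inr ⟨_, _, .all h⟩]
  | rcd _ _ ih =>
    rcases ih with h | ⟨_, _, h⟩
    exacts [.inl (.rcd h), .inr ⟨_, _, .rcd h⟩]

theorem Spl.tl_of_parts {Δ : TCtx} {C C1 C2 : Ty} (hs : Spl C C1 C2) (h1 : TL Δ C1)
    (h2 : TL Δ C2) : TL Δ C := by
  induction hs generalizing Δ with
  | and => exact .and h1 h2
  | arrow _ ih => cases h1 with | arrow h1 => cases h2 with | arrow h2 => exact .arrow (ih h1 h2)
  | rcd _ ih => cases h1 with | rcd h1 => cases h2 with | rcd h2 => exact .rcd (ih h1 h2)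
  | all _ ih => cases h1 with | all h1 => cases h2 with | all h2 => exact .all (ih h1 h2)

def bottomVars (Δ : TCtx) : Set ℕ := {X | ∃ A, (X, A) ∈ Δ ∧ BL A}

theorem bottomVars_mono {Γ Γ' : TCtx} (h : Γ ⊆ Γ') : bottomVars Γ ⊆ bottomVars Γ' :=
  fun _ ⟨A, hA, hbl⟩ => ⟨A, h hA, hbl⟩

theorem bottomVars_cons_subset_cons {Γ Γ' : TCtx} {X : ℕ} {A A' : Ty}
    (hΓ : bottomVars Γ ⊆ bottomVars Γ') (hA : BL A → BL A') :
    bottomVars ((X, A) :: Γ) ⊆ bottomVars ((X, A') :: Γ') := by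
  rintro Y ⟨D, hD, hbl⟩
  rcases List.mem_cons.1 hD with hD | hD
  · obtain ⟨rfl, rfl⟩ := Prod.mk.inj hD
    exact ⟨A', List.mem_cons_self, hA hbl⟩
  · obtain ⟨D', hD', hbl'⟩ := hΓ ⟨D, hD, hbl⟩
    exact ⟨D', List.mem_cons_of_mem _ hD', hbl'⟩

theorem TL.mono_s7 {Γ Γ' : TCtx} {A : Ty} (h : TL Γ A) (hΓ : bottomVars Γ ⊆ bottomVars Γ') :
    TL Γ' A := by
  induction h generalizing Γ' with
  | top => exact .top
  | and _ _ ih1 ih2 => exact .and (ih1 hΓ) (ih2 hΓ)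
  | arrow _ ih => exact .arrow (ih hΓ)
  | rcd _ ih => exact .rcd (ih hΓ)
  | all _ ih => exact .all (ih (bottomVars_cons_subset_cons hΓ id))
  | tvar hmem hbl =>
    obtain ⟨D, hD, hbl'⟩ := hΓ ⟨_, hmem, hbl⟩
    exact .tvar hD hbl'

theorem ASub.mono_s7 {Γ Γ' : TCtx} {A B : Ty} (h : ASub Γ A B)
    (hΓ : bottomVars Γ ⊆ bottomVars Γ') : ASub Γ' A B := by
  induction h generalizing Γ' with
  | and hs _ _ ih1 ih2 => exact .and hs (ih1 hΓ) (ih2 hΓ)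
  | int => exact .int
  | var => exact .var
  | bot ho => exact .bot ho
  | top ho ht => exact .top ho (ht.mono_s7 hΓ)
  | andl ho _ ih => exact .andl ho (ih hΓ)
  | andr ho _ ih => exact .andr ho (ih hΓ)
  | arrow ho _ _ ih1 ih2 => exact .arrow ho (ih1 hΓ) (ih2 hΓ)
  | rcd ho _ ih => exact .rcd ho (ih hΓ)
  | all ho _ _ ih1 ih2 => exact .all ho (ih1 hΓ) (ih2 (bottomVars_cons_subset_cons hΓ id))

theorem ASub.induction_on_ordinary {Δ : TCtx} {B : Ty} {motive : Ty → Prop}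
    (split : ∀ {C C1 C2}, Spl C C1 C2 → motive C1 → motive C2 → motive C)
    (ordinary : ∀ C, Ordinary C → ASub Δ B C → motive C) {C : Ty} (h : ASub Δ B C) :
    motive C := by
  induction h with
  | and hs _ _ ih1 ih2 => exact split hs (ih1 ordinary) (ih2 ordinary)
  | int => exact ordinary _ .tint .int
  | var => exact ordinary _ .tvar .var
  | bot ho => exact ordinary _ ho (.bot ho)
  | top ho ht => exact ordinary _ ho (.top ho ht)
  | andl ho h => exact ordinary _ ho (.andl ho h)
  | andr ho h => exact ordinary _ ho (.andr ho h)
  | arrow ho h1 h2 => exact ordinary _ ho (.arrow ho h1 h2)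
  | rcd ho h => exact ordinary _ ho (.rcd ho h)
  | all ho h1 h2 => exact ordinary _ ho (.all ho h1 h2)

theorem ASub.bl_of_bl {Δ : TCtx} {B C : Ty} (h : ASub Δ C B) (hB : BL B) : BL C := by
  induction h with
  | and hs _ _ ih1 ih2 =>
    cases hB with
    | bot => cases hs
    | andl hb => cases hs; exact ih1 hb
    | andr hb => cases hs; exact ih2 hb
  | int | var | arrow | rcd | all => cases hB
  | bot => exact .bot
  | top ho ht =>
    cases hB with
    | bot => cases ht
    | andl _ | andr _ => cases ho
  | andl _ _ ih => exact .andl (ih hB)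
  | andr _ _ ih => exact .andr (ih hB)

theorem ASub.tl_of_tl {Δ : TCtx} {B C : Ty} (h : ASub Δ B C) (hB : TL Δ B) : TL Δ C := by
  induction h with
  | and hs _ _ ih1 ih2 => exact hs.tl_of_parts (ih1 hB) (ih2 hB)
  | int | var => exact hB
  | bot => cases hB
  | top _ ht => exact ht
  | andl _ _ ih => cases hB with | and h1 _ => exact ih h1
  | andr _ _ ih => cases hB with | and _ h2 => exact ih h2
  | arrow _ _ _ _ ih => cases hB with | arrow h => exact .arrow (ih h)
  | rcd _ _ ih => cases hB with | rcd h => exact .rcd (ih h)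
  | all _ h1 _ _ ih =>
    cases hB with
    | all h => exact .all (ih (h.mono_s7 (bottomVars_cons_subset_cons subset_rfl h1.bl_of_bl)))

theorem Spl.asub_of_left {Δ : TCtx} {A A1 A2 C : Ty} (hs : Spl A A1 A2) (h : ASub Δ A1 C) :
    ASub Δ A C := by
  induction h generalizing A A2 with
  | and hC _ _ ih1 ih2 => exact .and hC (ih1 hs) (ih2 hs)
  | top ho ht => exact .top ho ht
  | int => cases hs; exact .andl .tint .int
  | var => cases hs; exact .andl .tvar .var
  | bot ho => cases hs; exact .andl ho (.bot ho)
  | andl ho h => cases hs; exact .andl ho (.andl ho h)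
  | andr ho h => cases hs; exact .andl ho (.andr ho h)
  | arrow ho h1 h2 _ ih =>
    cases hs with
    | and => exact .andl ho (.arrow ho h1 h2)
    | arrow hs => exact .arrow ho h1 (ih hs)
  | rcd ho h ih =>
    cases hs with
    | and => exact .andl ho (.rcd ho h)
    | rcd hs => exact .rcd ho (ih hs)
  | all ho h1 h2 _ ih =>
    cases hs with
    | and => exact .andl ho (.all ho h1 h2)
    | all hs => exact .all ho h1 (ih hs)

theorem Spl.asub_of_right {Δ : TCtx} {A A1 A2 C : Ty} (hs : Spl A A1 A2) (h : ASub Δ A2 C) :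
    ASub Δ A C := by
  induction h generalizing A A1 with
  | and hC _ _ ih1 ih2 => exact .and hC (ih1 hs) (ih2 hs)
  | top ho ht => exact .top ho ht
  | int => cases hs; exact .andr .tint .int
  | var => cases hs; exact .andr .tvar .var
  | bot ho => cases hs; exact .andr ho (.bot ho)
  | andl ho h => cases hs; exact .andr ho (.andl ho h)
  | andr ho h => cases hs; exact .andr ho (.andr ho h)
  | arrow ho h1 h2 _ ih =>
    cases hs with
    | and => exact .andr ho (.arrow ho h1 h2)
    | arrow hs => exact .arrow ho h1 (ih hs)
  | rcd ho h ih =>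
    cases hs with
    | and => exact .andr ho (.rcd ho h)
    | rcd hs => exact .rcd ho (ih hs)
  | all ho h1 h2 _ ih =>
    cases hs with
    | and => exact .andr ho (.all ho h1 h2)
    | all hs => exact .all ho h1 (ih hs)

theorem ASub.refl (Δ : TCtx) (A : Ty) : ASub Δ A A := by
  rcases A.ordinary_or_split with hA | ⟨A1, A2, hs⟩
  · cases hA with
    | tvar => exact .var
    | tint => exact .int
    | ttop => exact .top .ttop .top
    | tbot => exact .bot .tbot
    | arrow hB => exact .arrow (.arrow hB) (refl Δ _) (refl Δ _)
    | all hB => exact .all (.all hB) (refl Δ _) (refl _ _)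
    | rcd hB => exact .rcd (.rcd hB) (refl Δ _)
  · have := hs.sizeOf_lt
    exact .and hs (hs.asub_of_left (refl Δ A1)) (hs.asub_of_right (refl Δ A2))
termination_by sizeOf A

theorem ASub.of_split_left {Δ : TCtx} {B B1 B2 C : Ty} (h : ASub Δ B C) (hs : Spl B B1 B2)
    (hC : Ordinary C) : ASub Δ B1 C ∨ ASub Δ B2 C ∨ TL Δ C := by
  induction h generalizing B1 B2 with
  | and hC' => exact (hC'.not_ordinary hC).elim
  | int | var | bot => cases hs
  | top _ ht => exact .inr (.inr ht)
  | andl _ h => cases hs; exact .inl h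
  | andr _ h => cases hs; exact .inr (.inl h)
  | arrow ho h1 _ _ ih =>
    cases hs with | arrow hs => cases hC with | arrow hC =>
    rcases ih hs hC with h | h | h
    exacts [.inl (.arrow ho h1 h), .inr (.inl (.arrow ho h1 h)), .inr (.inr (.arrow h))]
  | rcd ho _ ih =>
    cases hs with | rcd hs => cases hC with | rcd hC =>
    rcases ih hs hC with h | h | h
    exacts [.inl (.rcd ho h), .inr (.inl (.rcd ho h)), .inr (.inr (.rcd h))]
  | all ho h1 _ _ ih =>
    cases hs with | all hs => cases hC with | all hC =>
    rcases ih hs hC with h | h | h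
    exacts [.inl (.all ho h1 h), .inr (.inl (.all ho h1 h)), .inr (.inr (.all h))]

theorem ASub.trans {Δ : TCtx} {A B C : Ty} (h1 : ASub Δ A B) (h2 : ASub Δ B C) :
    ASub Δ A C := by
  refine h2.induction_on_ordinary (fun hs => .and hs) fun C hC h2 => ?_
  cases h1 with
  | and hs hA1 hA2 =>
    have := hs.sizeOf_lt
    rcases h2.of_split_left hs hC with h | h | h
    exacts [hA1.trans h, hA2.trans h, .top hC h]
  | int | var => exact h2
  | bot => exact .bot hC
  | top _ ht => exact .top hC (h2.tl_of_tl ht)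
  | andl _ h => exact .andl hC (h.trans h2)
  | andr _ h => exact .andr hC (h.trans h2)
  | arrow _ hB1A1 hA2B2 =>
    cases h2 with
    | and hs => exact (hs.not_ordinary hC).elim
    | top _ ht => exact .top hC ht
    | arrow _ hC1B1 hB2C2 => exact .arrow hC (hC1B1.trans hB1A1) (hA2B2.trans hB2C2)
  | rcd _ hAB =>
    cases h2 with
    | and hs => exact (hs.not_ordinary hC).elim
    | top _ ht => exact .top hC ht
    | rcd _ hBC => exact .rcd hC (hAB.trans hBC)
  | all _ hB1A1 hA2B2 =>
    cases h2 with
    | and hs => exact (hs.not_ordinary hC).elim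
    | top _ ht => exact .top hC ht
    | all _ hC1B1 hB2C2 =>
      have hA2B2' := hA2B2.mono_s7 (bottomVars_cons_subset_cons subset_rfl hC1B1.bl_of_bl)
      exact .all hC (hC1B1.trans hB1A1) (hA2B2'.trans hB2C2)
termination_by (sizeOf B, sizeOf A)

inductive SameHead : Ty → Ty → Prop
  | tvar {X} : SameHead (.tvar X) (.tvar X)
  | tint : SameHead .tint .tint
  | ttop : SameHead .ttop .ttop
  | tbot : SameHead .tbot .tbot
  | and {A B C D} : SameHead (.and A B) (.and C D)
  | arrow {A B C D} : SameHead (.arrow A B) (.arrow C D)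
  | all {X A B C D} : SameHead (.all X A B) (.all X C D)
  | rcd {l A B} : SameHead (.rcd l A) (.rcd l B)

theorem SameHead.refl (A : Ty) : SameHead A A := by
  cases A <;> constructor

theorem DAx.of_sameHead {A B A' B' : Ty} (h : DAx A B) (hA : SameHead A A')
    (hB : SameHead B B') : DAx A' B' := by
  induction h generalizing A' B' with
  | symm _ ih => exact .symm (ih hB hA)
  | rcdNeq hne => cases hA; cases hB; exact .rcdNeq hne
  | _ => cases hA; cases hB; constructor

def Ty.HasAxHead : Ty → Prop
  | .tint | .arrow _ _ | .rcd _ _ | .all _ _ _ => True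
  | _ => False

theorem DAx.hasAxHead {A B : Ty} (h : DAx A B) : A.HasAxHead ∧ B.HasAxHead := by
  induction h with
  | symm _ ih => exact ih.symm
  | _ => exact ⟨trivial, trivial⟩

theorem DAx.of_asub_right {Δ : TCtx} {A B C : Ty} (h : DAx A B) (hBC : ASub Δ B C)
    (hC : Ordinary C) : DAx A C ∨ TL Δ C := by
  cases hBC with
  | and hs => exact (hs.not_ordinary hC).elim
  | int | var => exact .inl h
  | top _ ht => exact .inr ht
  | bot | andl | andr => exact h.hasAxHead.2.elim
  | arrow => exact .inl (h.of_sameHead (.refl A) .arrow)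
  | rcd => exact .inl (h.of_sameHead (.refl A) .rcd)
  | all => exact .inl (h.of_sameHead (.refl A) .all)

def Narrows (Γ' Γ : TCtx) : Prop :=
  ∀ X P, (X, P) ∈ Γ → ∃ Q, (X, Q) ∈ Γ' ∧ ASub Γ' Q P

theorem Narrows.refl (Γ : TCtx) : Narrows Γ Γ :=
  fun _ P hP => ⟨P, hP, .refl Γ P⟩

theorem Narrows.bottomVars_subset {Γ Γ' : TCtx} (h : Narrows Γ' Γ) :
    bottomVars Γ ⊆ bottomVars Γ' := by
  rintro X ⟨P, hP, hbl⟩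
  obtain ⟨Q, hQ, hQP⟩ := h X P hP
  exact ⟨Q, hQ, hQP.bl_of_bl hbl⟩

theorem Narrows.cons {Γ Γ' : TCtx} {X : ℕ} {P Q : Ty} (h : Narrows Γ' Γ)
    (hQP : ASub Γ' Q P) : Narrows ((X, Q) :: Γ') ((X, P) :: Γ) := by
  have weaken {A B : Ty} (hAB : ASub Γ' A B) : ASub ((X, Q) :: Γ') A B :=
    hAB.mono_s7 (bottomVars_mono (List.subset_cons_self _ _))
  intro Y P' hP'
  rcases List.mem_cons.1 hP' with hP' | hP'
  · obtain ⟨rfl, rfl⟩ := Prod.mk.inj hP'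
    exact ⟨Q, List.mem_cons_self, weaken hQP⟩
  · obtain ⟨Q', hQ', hQ'P'⟩ := h Y P' hP'
    exact ⟨Q', List.mem_cons_of_mem _ hQ', weaken hQ'P'⟩

theorem Disj.of_narrows_of_asub {Γ Γ' : TCtx} {A B C : Ty} (h : Disj Γ A B)
    (hΓ : Narrows Γ' Γ) (hC : Ordinary C) (hBC : ASub Γ' B C) : Disj Γ' A C := by
  induction h generalizing Γ' C with
  | topl ht => exact .topl (ht.mono_s7 hΓ.bottomVars_subset)
  | topr ht => exact .topr (hBC.tl_of_tl (ht.mono_s7 hΓ.bottomVars_subset))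
  | varl hmem hsub =>
    obtain ⟨Q, hQ, hQP⟩ := hΓ _ _ hmem
    exact .varl hQ (hQP.trans ((hsub.mono_s7 hΓ.bottomVars_subset).trans hBC))
  | varr hmem hsub =>
    obtain ⟨Q, hQ, hQP⟩ := hΓ _ _ hmem
    cases hBC with
    | and hs => exact (hs.not_ordinary hC).elim
    | var => exact .varr hQ (hQP.trans (hsub.mono_s7 hΓ.bottomVars_subset))
    | top _ ht => exact .topr ht
  | spll hs _ _ ih1 ih2 => exact .spll hs (ih1 hΓ hC hBC) (ih2 hΓ hC hBC)
  | splr hs _ _ ih1 ih2 =>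
    rcases hBC.of_split_left hs hC with h | h | h
    exacts [ih1 hΓ hC h, ih2 hΓ hC h, .topr h]
  | arrow _ ih =>
    cases hBC with
    | and hs => exact (hs.not_ordinary hC).elim
    | top _ ht => exact .topr ht
    | arrow _ _ h => cases hC with | arrow hC => exact .arrow (ih hΓ hC h)
  | rcd _ ih =>
    cases hBC with
    | and hs => exact (hs.not_ordinary hC).elim
    | top _ ht => exact .topr ht
    | rcd _ h => cases hC with | rcd hC => exact .rcd (ih hΓ hC h)
  | @all _ _ A1 _ B1 _ _ ih =>
    cases hBC with
    | and hs => exact (hs.not_ordinary hC).elim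
    | top _ ht => exact .topr ht
    | @all _ _ _ _ C1 _ _ hC1B1 hB2C2 =>
      cases hC with | all hC =>
      have hbound : ASub Γ' (.and A1 C1) (.and A1 B1) :=
        .and .and (Spl.and.asub_of_left (.refl Γ' A1)) (Spl.and.asub_of_right hC1B1)
      exact .all (ih (hΓ.cons hbound) hC
        (hB2C2.mono_s7 (bottomVars_cons_subset_cons subset_rfl .andr)))
  | ax hax =>
    rcases hax.of_asub_right hBC hC with h | h
    exacts [.ax h, .topr h]

/-- Covariance of disjointness. -/
theorem disjointness_covariance (Δ : TCtx) (A B C : Ty)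
    (h1 : Disj Δ A B) (h2 : ASub Δ B C) : Disj Δ A C :=
  h2.induction_on_ordinary (fun hs => .splr hs) fun _ hC hBC =>
    h1.of_narrows_of_asub (.refl Δ) hC hBC
end
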